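/- The composition s_{n+2} ∘ s_{n+3} has order four: (s_{n+2} s_{n+3})⁴ = id, i.e., at every point where all denominators occurring in the eightfold composition are nonzero, applying s_{n+2}, s_{n+3} alternately four times each returns the original point. -/
import Mathlib


open Finset

noncomputable section

/-- A point `(ε, q, p, x) ∈ ℂ^{n+3} × ℂⁿ × ℂⁿ × ℂⁿ`, where `n = m + 2` (so `n ≥ 2`).
Indices are 0-based: `e ⟨j-1,_⟩` is the paper's `ε_j`, etc. -/
structure GPt (m : ℕ) where
  e : Fin (m + 5) → ℂ
  q : Fin (m + 2) → ℂ
  p : Fin (m + 2) → ℂ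
  x : Fin (m + 2) → ℂ

namespace GPt

variable {m : ℕ}

/-- `Q₁ = Σ_{l=1}^n q_l p_l + (1 − Σ_{l=1}^{n+3} ε_l)/2`. -/
def Q1 (P : GPt m) : ℂ := (∑ l, P.q l * P.p l) + (1 - ∑ j, P.e j) / 2

/-- `Q₂ = Σ_{j=1}^n q_j − 1`. -/
def Q2 (P : GPt m) : ℂ := (∑ j, P.q j) - 1

/-- The index of `ε_{j+3}` (paper numbering) for `j` indexing `q, p, x`. -/
def eIdx (j : Fin (m + 2)) : Fin (m + 5) := ⟨j.val + 3, by omega⟩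

/-- The transformation `s₀`. -/
def s0 (P : GPt m) : GPt m where
  e := fun j => if j = 0 then 1 - P.e 1 else if j = 1 then 1 - P.e 0 else P.e j
  q := fun j => P.p j * (P.q j * P.p j - P.e (eIdx j)) / (P.Q1 * (P.Q1 + P.e 2))
  p := fun j => -(P.Q1 * (P.Q1 + P.e 2)) / P.p j
  x := fun i => 1 / P.x i

/-- The transformation `s₁`. -/
def s1 (P : GPt m) : GPt m where
  e := fun j => P.e (Equiv.swap 0 1 j)
  q := fun j => P.q j / P.x j
  p := fun j => P.x j * P.p j
  x := fun i => 1 / P.x i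

/-- The transformation `s₂`. -/
def s2 (P : GPt m) : GPt m where
  e := fun j => P.e (Equiv.swap 1 2 j)
  q := fun j => P.q j / P.Q2
  p := fun j => (P.p j - P.Q1) * P.Q2
  x := fun i => P.x i / (P.x i - 1)

/-- The transformation `s₃`. -/
def s3 (P : GPt m) : GPt m where
  e := fun j => P.e (Equiv.swap 2 3 j)
  q := fun j => if j = 0 then 1 / P.q 0 else -P.q j / P.q 0
  p := fun j => if j = 0 then -(P.q 0 * P.Q1) else -(P.q 0 * P.p j)
  x := fun i => if i = 0 then 1 / P.x 0 else P.x i / P.x 0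

/-- The transformation `s_k` for `4 ≤ k ≤ n+2`: `ε_k ↔ ε_{k+1}` together with
`(q_{k-3}, p_{k-3}, x_{k-3}) ↔ (q_{k-2}, p_{k-2}, x_{k-2})` (paper numbering). -/
def sMid (k : ℕ) (h : 4 ≤ k ∧ k ≤ m + 4) (P : GPt m) : GPt m where
  e := fun j => P.e (Equiv.swap ⟨k - 1, by omega⟩ ⟨k, by omega⟩ j)
  q := fun j => P.q (Equiv.swap ⟨k - 4, by omega⟩ ⟨k - 3, by omega⟩ j)
  p := fun j => P.p (Equiv.swap ⟨k - 4, by omega⟩ ⟨k - 3, by omega⟩ j)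
  x := fun j => P.x (Equiv.swap ⟨k - 4, by omega⟩ ⟨k - 3, by omega⟩ j)

/-- The transformation `s_{n+3}`: `ε_{n+3} ↦ −ε_{n+3}`, `p_n ↦ p_n − ε_{n+3}/q_n`. -/
def sLast (P : GPt m) : GPt m where
  e := Function.update P.e ⟨m + 4, by omega⟩ (-(P.e ⟨m + 4, by omega⟩))
  q := P.q
  p := Function.update P.p (Fin.last (m + 1))
    (P.p (Fin.last (m + 1)) - P.e ⟨m + 4, by omega⟩ / P.q (Fin.last (m + 1)))
  x := P.x

/-- The family `s_k`, `k = 0, 1, …, n+3` (junk value `id` for `k > n+3`). -/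
def s (k : ℕ) (P : GPt m) : GPt m :=
  if k = 0 then P.s0
  else if k = 1 then P.s1
  else if k = 2 then P.s2
  else if k = 3 then P.s3
  else if h : 4 ≤ k ∧ k ≤ m + 4 then sMid k h P
  else if k = m + 5 then P.sLast
  else P

/-- The nonvanishing, at a given point, of all denominators occurring in `s_k`. -/
def Dfd (k : ℕ) (P : GPt m) : Prop :=
  if k = 0 then
    (∀ j, P.p j ≠ 0) ∧ P.Q1 ≠ 0 ∧ P.Q1 + P.e 2 ≠ 0 ∧ (∀ i, P.x i ≠ 0)
  else if k = 1 then ∀ i, P.x i ≠ 0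
  else if k = 2 then P.Q2 ≠ 0 ∧ ∀ i, P.x i ≠ 1
  else if k = 3 then P.q 0 ≠ 0 ∧ P.x 0 ≠ 0
  else if k = m + 5 then P.q (Fin.last (m + 1)) ≠ 0
  else True

/-- Apply `s_{k₁}, s_{k₂}, …` in succession. -/
def chain : List ℕ → GPt m → GPt m
  | [], P => P
  | k :: ks, P => chain ks (s k P)

/-- All denominators occurring in the successive application of
`s_{k₁}, s_{k₂}, …` are nonzero. -/
def chainDfd : List ℕ → GPt m → Prop
  | [], _ => True
  | k :: ks, P => Dfd k P ∧ chainDfd ks (s k P)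

end GPt

open GPt

namespace GPt

variable {m : ℕ}

/-- Nonvanishing of all denominators occurring in `s₀`. -/
def Dfd0 (P : GPt m) : Prop :=
  (∀ j, P.p j ≠ 0) ∧ P.Q1 ≠ 0 ∧ P.Q1 + P.e 2 ≠ 0 ∧ (∀ i, P.x i ≠ 0)

/-- Nonvanishing of all denominators occurring in `s₁`. -/
def Dfd1 (P : GPt m) : Prop := ∀ i, P.x i ≠ 0

/-- Nonvanishing of all denominators occurring in `s₂`. -/
def Dfd2 (P : GPt m) : Prop := P.Q2 ≠ 0 ∧ ∀ i, P.x i ≠ 1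

/-- Nonvanishing of all denominators occurring in `s₃`. -/
def Dfd3 (P : GPt m) : Prop := P.q 0 ≠ 0 ∧ P.x 0 ≠ 0

/-- Nonvanishing of all denominators occurring in `s_{n+3}`. -/
def DfdLast (P : GPt m) : Prop := P.q (Fin.last (m + 1)) ≠ 0

end GPt

open GPt

/-- The transformation `s_{n+2}` (here `n = m + 2`): `ε_{n+2} ↔ ε_{n+3}`
together with `(q_{n-1}, p_{n-1}, x_{n-1}) ↔ (q_n, p_n, x_n)`. -/
def GPt.sN2 {m : ℕ} (P : GPt m) : GPt m :=
  GPt.sMid (m + 4) ⟨by omega, le_rfl⟩ P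

namespace OrderFourAux

variable {m : ℕ}

lemma gpt_ext {A B : GPt m} (he : A.e = B.e) (hq : A.q = B.q)
    (hp : A.p = B.p) (hx : A.x = B.x) : A = B := by
  cases A; cases B; simp_all

lemma step_e (P : GPt m) (j : Fin (m + 5)) :
    (P.sN2.sLast).e j =
      if j = ⟨m + 3, by omega⟩ then P.e ⟨m + 4, by omega⟩
      else if j = ⟨m + 4, by omega⟩ then -P.e ⟨m + 3, by omega⟩
      else P.e j := by
  simp only [GPt.sN2, GPt.sMid, GPt.sLast, Function.update, Equiv.swap_apply_def,
    Fin.mk.injEq, eq_rec_constant]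
  split_ifs <;> simp only [Fin.mk.injEq, Fin.ext_iff, Fin.val_mk] at * <;>
    first | rfl | omega | (congr 1; exact Fin.ext (by simp; omega))

lemma step_q (P : GPt m) (j : Fin (m + 2)) :
    (P.sN2.sLast).q j =
      if j = ⟨m, by omega⟩ then P.q ⟨m + 1, by omega⟩
      else if j = ⟨m + 1, by omega⟩ then P.q ⟨m, by omega⟩
      else P.q j := by
  simp only [GPt.sN2, GPt.sMid, GPt.sLast, Equiv.swap_apply_def, Fin.mk.injEq]
  split_ifs <;> simp_all [Fin.ext_iff] <;> omega

lemma step_x (P : GPt m) (j : Fin (m + 2)) :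
    (P.sN2.sLast).x j =
      if j = ⟨m, by omega⟩ then P.x ⟨m + 1, by omega⟩
      else if j = ⟨m + 1, by omega⟩ then P.x ⟨m, by omega⟩
      else P.x j := by
  simp only [GPt.sN2, GPt.sMid, GPt.sLast, Equiv.swap_apply_def, Fin.mk.injEq]
  split_ifs <;> simp_all [Fin.ext_iff] <;> omega

lemma step_p (P : GPt m) (j : Fin (m + 2)) :
    (P.sN2.sLast).p j =
      if j = ⟨m, by omega⟩ then P.p ⟨m + 1, by omega⟩
      else if j = ⟨m + 1, by omega⟩ then
        P.p ⟨m, by omega⟩ - P.e ⟨m + 3, by omega⟩ / P.q ⟨m, by omega⟩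
      else P.p j := by
  simp only [GPt.sN2, GPt.sMid, GPt.sLast, Function.update, Equiv.swap_apply_def,
    Fin.mk.injEq, eq_rec_constant, Fin.last]
  split_ifs <;> simp only [Fin.mk.injEq, Fin.ext_iff, Fin.val_mk, Fin.last] at * <;>
    first | rfl | omega | (congr 1 <;> first | (exact Fin.ext (by simp; omega)) | omega)

theorem main (P : GPt m) : P.sN2.sLast.sN2.sLast.sN2.sLast.sN2.sLast = P := by
  apply gpt_ext <;> funext j <;>
    simp only [step_e, step_q, step_x, step_p] <;>
    split_ifs
  all_goals simp only [Fin.mk.injEq, Fin.ext_iff, Fin.val_mk] at *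
  all_goals try first | rfl | ring
  all_goals try omega
  all_goals congr 1
  all_goals exact Fin.ext (by simp; omega)

end OrderFourAux

/-- `(s_{n+2} s_{n+3})⁴ = id`: at every point where all denominators occurring
in the eightfold composition are nonzero (the map `s_{n+2}` has no denominators;
`s_{n+3}` has denominator `q_n`), applying `s_{n+2}, s_{n+3}` alternately four
times each returns the original point. -/
theorem sN2_sN3_order_four (m : ℕ) (P : GPt m)
    (h0 : DfdLast P.sN2)
    (h1 : DfdLast P.sN2.sLast.sN2)
    (h2 : DfdLast P.sN2.sLast.sN2.sLast.sN2)
    (h3 : DfdLast P.sN2.sLast.sN2.sLast.sN2.sLast.sN2) :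
    P.sN2.sLast.sN2.sLast.sN2.sLast.sN2.sLast = P :=
  OrderFourAux.main P
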